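/- arXiv:1307.4032 — 3 statements merged into one kernel-verified Lean document; each statement's English description precedes it below -/
import Mathlib

section
/- Let k be a field of characteristic zero and A a commutative k-algebra which is an integral domain. If I is an ideal of A which is stable under every k-linear derivation of A, and I is neither the zero ideal nor the unit ideal, then A admits a nonzero prime ideal containing I that is stable under all derivations; in particular, for A = k[x,y] a nonzero ideal stable under ∂/∂x and ∂/∂y must be the unit ideal. -/
/-!
An ideal that is proper and maximal among the ideals stable under all derivations is prime.
In characteristic zero the radical of a stable ideal is stable (from `x ^ (n + 1) ∈ P` one
trades powers of `x` for powers of `D x` until `(D x) ^ m ∈ P`), so such a maximal `P` is radical;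
and for `a ∉ P` the colon ideal `P : a` is again stable, because `a ^ 2 * D x ∈ P` whenever
`x a ∈ P`, so maximality forces `P : a = P`. Zorn's lemma supplies a maximal stable ideal above `I`.

For `k[x,y]`, a nonzero element of minimal total degree in a stable ideal must be constant:
otherwise one of its partial derivatives is nonzero and of smaller degree.
-/

open MvPolynomial

namespace Ideal

variable {A : Type*} [CommRing A]

def IsDifferential (k : Type*) [CommRing k] [Algebra k A] (I : Ideal A) : Prop :=
  ∀ D : Derivation k A A, ∀ x ∈ I, D x ∈ I

section CommRing

variable {k : Type*} [CommRing k] [Algebra k A] {P : Ideal A}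

theorem IsDifferential.colon_singleton (hP : P.IsDifferential k) (hrad : P.IsRadical) (a : A) :
    (P.colon {a}).IsDifferential k := by
  intro D x hx
  rw [Submodule.mem_colon_singleton, smul_eq_mul] at hx ⊢
  have hDxa := hP D _ hx
  rw [Derivation.leibniz, smul_eq_mul, smul_eq_mul] at hDxa
  have haaDx : a * (a * D x) ∈ P := by
    convert P.sub_mem (P.mul_mem_left a hDxa) (P.mul_mem_right (D a) hx) using 1
    ring
  exact hrad ⟨2, by convert P.mul_mem_left (D x) haaDx using 1; ring⟩

theorem isDifferential_sSup_of_directedOn {c : Set (Ideal A)} (hne : c.Nonempty)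
    (hdir : DirectedOn (· ≤ ·) c) (hc : ∀ J ∈ c, J.IsDifferential k) :
    (sSup c).IsDifferential k := by
  intro D x hx
  obtain ⟨J, hJc, hxJ⟩ := (Submodule.mem_sSup_of_directed hne hdir).mp hx
  exact le_sSup hJc (hc J hJc D x hxJ)

theorem sSup_ne_top_of_directedOn {c : Set (Ideal A)} (hne : c.Nonempty)
    (hdir : DirectedOn (· ≤ ·) c) (hc : ∀ J ∈ c, J ≠ ⊤) : sSup c ≠ ⊤ := by
  intro htop
  obtain ⟨J, hJc, h1J⟩ :=
    (Submodule.mem_sSup_of_directed hne hdir).mp (htop ▸ Submodule.mem_top : (1 : A) ∈ sSup c)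
  exact hc J hJc ((eq_top_iff_one J).mpr h1J)

theorem exists_le_maximal_isDifferential {I : Ideal A} (hI : I ≠ ⊤) (hID : I.IsDifferential k) :
    ∃ P, I ≤ P ∧ Maximal (fun J : Ideal A => J ≠ ⊤ ∧ J.IsDifferential k) P :=
  zorn_le_nonempty₀ {J : Ideal A | J ≠ ⊤ ∧ J.IsDifferential k}
    (fun c hc hchain J hJ =>
      ⟨sSup c,
        ⟨sSup_ne_top_of_directedOn ⟨J, hJ⟩ hchain.directedOn fun _ hJ => (hc hJ).1,
          isDifferential_sSup_of_directedOn ⟨J, hJ⟩ hchain.directedOn fun _ hJ => (hc hJ).2⟩,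
        fun _ => le_sSup⟩)
    I ⟨hI, hID⟩

end CommRing

section CharZero

theorem mem_of_natCast_mul_mem (k : Type*) [Field k] [CharZero k] [Algebra k A] {P : Ideal A}
    {n : ℕ} (hn : n ≠ 0) {y : A} (h : (n : A) * y ∈ P) : y ∈ P := by
  have hunit : IsUnit (n : A) := by
    simpa using (IsUnit.mk0 (n : k) (Nat.cast_ne_zero.mpr hn)).map (algebraMap k A)
  exact (P.unit_mul_mem_iff_mem hunit).mp h

variable {k : Type*} [Field k] [CharZero k] [Algebra k A] {P : Ideal A}

theorem IsDifferential.pow_mul_derivation_pow_mem (hP : P.IsDifferential k) (D : Derivation k A A)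
    {x : A} {a b : ℕ} (h : x ^ (a + 1) * D x ^ (b + 1) ∈ P) : x ^ a * D x ^ (b + 3) ∈ P := by
  have key : ((a + 1 : ℕ) : A) * (x ^ a * D x ^ (b + 3)) =
      D x * D (x ^ (a + 1) * D x ^ (b + 1)) - (b + 1) * D (D x) * (x ^ (a + 1) * D x ^ (b + 1)) := by
    rw [Derivation.leibniz, Derivation.leibniz_pow, Derivation.leibniz_pow]
    simp only [smul_eq_mul, nsmul_eq_mul, Nat.add_sub_cancel]
    push_cast
    ring
  refine mem_of_natCast_mul_mem k a.succ_ne_zero ?_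
  rw [key]
  exact P.sub_mem (P.mul_mem_left _ (hP D _ h)) (P.mul_mem_left _ h)

theorem IsDifferential.derivation_mem_radical_of_pow_mul_mem (hP : P.IsDifferential k)
    (D : Derivation k A A) {x : A} (a : ℕ) :
    ∀ b : ℕ, x ^ a * D x ^ (b + 1) ∈ P → D x ∈ P.radical := by
  induction a with
  | zero => exact fun b h => ⟨b + 1, by simpa using h⟩
  | succ a ih => exact fun b h => ih (b + 2) (hP.pow_mul_derivation_pow_mem D h)

theorem IsDifferential.radical (hP : P.IsDifferential k) : P.radical.IsDifferential k := by
  rintro D x ⟨n, hn⟩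
  have hDpow := hP D _ (P.mul_mem_left x hn)
  rw [← pow_succ', Derivation.leibniz_pow, Nat.add_sub_cancel, nsmul_eq_mul, smul_eq_mul] at hDpow
  exact hP.derivation_mem_radical_of_pow_mul_mem D n 0
    (by simpa using mem_of_natCast_mul_mem k n.succ_ne_zero hDpow)

theorem isPrime_of_maximal_isDifferential
    (hP : Maximal (fun J : Ideal A => J ≠ ⊤ ∧ J.IsDifferential k) P) : P.IsPrime := by
  obtain ⟨⟨hPtop, hPD⟩, hmax⟩ := hP
  have hrad : P.IsRadical :=
    hmax ⟨fun h => hPtop (radical_eq_top.mp h), hPD.radical⟩ le_radical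
  refine ⟨hPtop, fun {a b} hab => or_iff_not_imp_left.mpr fun ha => ?_⟩
  have hcolon_ne_top : P.colon {a} ≠ ⊤ := fun h =>
    ha (by simpa using (h ▸ Submodule.mem_top : (1 : A) ∈ P.colon {a}))
  have hle : P ≤ P.colon {a} := fun p hp => by
    simpa using P.mul_mem_right a hp
  exact hmax ⟨hcolon_ne_top, hPD.colon_singleton hrad a⟩ hle (by simpa [mul_comm] using hab)

theorem exists_isPrime_le_isDifferential {I : Ideal A} (hI : I ≠ ⊤) (hID : I.IsDifferential k) :
    ∃ P : Ideal A, P.IsPrime ∧ I ≤ P ∧ P.IsDifferential k := by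
  obtain ⟨P, hIP, hmax⟩ := exists_le_maximal_isDifferential hI hID
  exact ⟨P, isPrime_of_maximal_isDifferential hmax, hIP, hmax.prop.2⟩

end CharZero

end Ideal

namespace MvPolynomial

variable {R σ : Type*} [CommSemiring R] {p : MvPolynomial σ R}

theorem totalDegree_pderiv_lt {i : σ} (h : pderiv i p ≠ 0) :
    (pderiv i p).totalDegree < p.totalDegree := by
  obtain ⟨m, hm, hdeg⟩ := Finset.exists_mem_eq_sup _ (support_nonempty.mpr h)
    (fun m : σ →₀ ℕ => m.sum fun _ e => e)
  have hcoeff : coeff (m + Finsupp.single i 1) p ≠ 0 := by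
    intro h0
    rw [mem_support_iff, coeff_pderiv, h0, zero_mul] at hm
    exact hm rfl
  have hle := le_totalDegree (mem_support_iff.mpr hcoeff)
  rw [Finsupp.sum_add_index' (fun _ => rfl) (fun _ _ _ => rfl),
    Finsupp.sum_single_index rfl] at hle
  rw [totalDegree, hdeg]
  omega

theorem exists_pderiv_ne_zero [NoZeroDivisors R] [CharZero R] (hp : 0 < p.totalDegree) :
    ∃ i, pderiv i p ≠ 0 := by
  obtain ⟨m, hm, i, hmi⟩ : ∃ m ∈ p.support, ∃ i, m i ≠ 0 := by
    by_contra! h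
    exact hp.ne' ((totalDegree_eq_zero_iff _ p).mpr h)
  refine ⟨i, fun h0 => ?_⟩
  have hsub : m - Finsupp.single i 1 + Finsupp.single i 1 = m :=
    tsub_add_cancel_of_le (Finsupp.single_le_iff.mpr (Nat.one_le_iff_ne_zero.mpr hmi))
  have hcoeff := coeff_pderiv (i := i) p (m - Finsupp.single i 1)
  rw [h0, coeff_zero, hsub, eq_comm, mul_eq_zero] at hcoeff
  exact hcoeff.elim (mem_support_iff.mp hm) (Nat.cast_add_one_ne_zero _)

end MvPolynomial

theorem Ideal.eq_top_of_pderiv_mem {σ k : Type*} [Field k] [CharZero k]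
    {J : Ideal (MvPolynomial σ k)} (hJ : J ≠ ⊥) (hstab : ∀ i, ∀ p ∈ J, pderiv i p ∈ J) :
    J = ⊤ := by
  obtain ⟨p, hpJ, hp⟩ := Submodule.exists_mem_ne_zero_of_ne_bot hJ
  induction hd : p.totalDegree using Nat.strong_induction_on generalizing p with
  | _ n ih =>
  rcases Nat.eq_zero_or_pos n with rfl | hn
  · rw [totalDegree_eq_zero_iff_eq_C] at hd
    have hc : coeff 0 p ≠ 0 := fun h0 => hp (by rw [hd, h0, C_0])
    exact eq_top_of_isUnit_mem _ hpJ (hd ▸ (isUnit_iff_ne_zero.mpr hc).map C)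
  · obtain ⟨i, hi⟩ := exists_pderiv_ne_zero (hd ▸ hn)
    exact ih _ (hd ▸ totalDegree_pderiv_lt hi) _ (hstab i p hpJ) hi rfl

theorem stmt_2_general (k : Type*) [Field k] [CharZero k]
    (A : Type*) [CommRing A] [Algebra k A]
    (I : Ideal A) (hI0 : I ≠ ⊥) (hI1 : I ≠ ⊤)
    (hstab : ∀ (D : Derivation k A A), ∀ x ∈ I, D x ∈ I) :
    (∃ P : Ideal A, P.IsPrime ∧ P ≠ ⊥ ∧ I ≤ P ∧
      ∀ (D : Derivation k A A), ∀ x ∈ P, D x ∈ P) ∧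
    (∀ J : Ideal (MvPolynomial (Fin 2) k), J ≠ ⊥ →
      (∀ x ∈ J, MvPolynomial.pderiv (0 : Fin 2) x ∈ J) →
      (∀ x ∈ J, MvPolynomial.pderiv (1 : Fin 2) x ∈ J) →
      J = ⊤) := by
  refine ⟨?_, fun J hJ h0 h1 => Ideal.eq_top_of_pderiv_mem hJ fun i => ?_⟩
  · obtain ⟨P, hP, hIP, hPD⟩ := Ideal.exists_isPrime_le_isDifferential hI1 hstab
    exact ⟨P, hP, fun h => hI0 (le_bot_iff.mp (h ▸ hIP)), hIP, hPD⟩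
  · fin_cases i
    exacts [h0, h1]

/-- Over a field `k` of characteristic zero: (1) if `A` is a commutative `k`-algebra
domain and `I` a proper nonzero ideal stable under every `k`-linear derivation of `A`,
then there is a nonzero prime ideal containing `I` which is stable under all
derivations; (2) in particular, in `k[x,y]` a nonzero ideal stable under both partial
derivatives must be the unit ideal. -/
theorem stmt_2 (k : Type*) [Field k] [CharZero k]
    (A : Type*) [CommRing A] [IsDomain A] [Algebra k A]
    (I : Ideal A) (hI0 : I ≠ ⊥) (hI1 : I ≠ ⊤)
    (hstab : ∀ (D : Derivation k A A), ∀ x ∈ I, D x ∈ I) :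
    (∃ P : Ideal A, P.IsPrime ∧ P ≠ ⊥ ∧ I ≤ P ∧
      ∀ (D : Derivation k A A), ∀ x ∈ P, D x ∈ P) ∧
    (∀ J : Ideal (MvPolynomial (Fin 2) k), J ≠ ⊥ →
      (∀ x ∈ J, MvPolynomial.pderiv (0 : Fin 2) x ∈ J) →
      (∀ x ∈ J, MvPolynomial.pderiv (1 : Fin 2) x ∈ J) →
      J = ⊤) :=
  stmt_2_general k A I hI0 hI1 hstab
end

section
/- Let F : A → B be a left exact additive functor between abelian categories with enough injectives such that R²F = 0, and let f : M → N be a morphism in A with M and N both F-acyclic (R¹F M = R¹F N = 0). If the kernel and cokernel of f are both 'exceptional' (killed by F and R¹F), then F(f) : FM → FN is an isomorphism; moreover Im(f) is F-acyclic and F(M) ≅ F(Im f) ≅ F(N). -/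
open CategoryTheory CategoryTheory.Limits

/-!
Only the first terms of the long exact sequence of `R•F` are needed; they come from dimension
shifting. If `R` is an injective resolution of `X`, then `R¹F X` is the homology of
`F R⁰ ⟶ F R¹ ⟶ F R²`, so it vanishes iff `F` maps `R⁰ ⟶ coker (X ⟶ R⁰)` onto. This does not
depend on the mono from `X`: for `j ≫ e = j'` the square formed by `e` and the two cokernel
projections is a pullback, `F` preserves it, and pullbacks of epimorphisms are epimorphisms.
Hence `R¹F A = 0` makes `F B ⟶ F (B / A)` onto for every `A ⊆ B`; applied to `ker f ⊆ M` this
makes `F M ⟶ F (Im f)` an isomorphism. Left exactness and `F (coker f) = 0` make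
`F (Im f) ⟶ F N` one, and the kernel–cokernel sequence of `Im f ⟶ N ⟶ I`, `I` injective,
gives `R¹F (Im f) = 0` from `R¹F N = 0`.
-/

namespace CategoryTheory

section

variable {C : Type*} [Category C] [Abelian C]

lemma isPullback_cokernel_map {X Y Z : C} {j : X ⟶ Y} {e : Y ⟶ Z} {j' : X ⟶ Z}
    (h : j ≫ e = j') [Mono j'] :
    IsPullback e (cokernel.π j) (cokernel.π j') (cokernel.map j j' (𝟙 X) e (by simp [h])) := by
  set q := cokernel.map j j' (𝟙 X) e (by simp [h])
  have sq : CommSq e (cokernel.π j) (cokernel.π j') q := ⟨(cokernel.π_desc _ _ _).symm⟩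
  let S := ShortComplex.mk (biprod.lift e (cokernel.π j)) (biprod.desc (cokernel.π j') (-q))
    (by simp [sq.w])
  have : Mono j := mono_of_mono_fac h
  have hj := ShortComplex.exact_cokernel j
  have hj' := ShortComplex.exact_cokernel j'
  have : Mono S.f := by
    rw [Preadditive.mono_iff_cancel_zero]
    intro A y hy
    have hye : y ≫ e = 0 := by simpa [S] using hy =≫ biprod.fst
    have hyπ : y ≫ cokernel.π j = 0 := by simpa [S] using hy =≫ biprod.snd
    obtain ⟨x, rfl⟩ : ∃ x, x ≫ j = y := ⟨hj.lift y hyπ, hj.lift_f y hyπ⟩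
    rw [Category.assoc, h, ← zero_comp (f := j')] at hye
    rw [cancel_mono j' |>.1 hye, zero_comp]
  have hS : S.Exact := by
    rw [ShortComplex.exact_iff_exact_up_to_refinements]
    intro A x hx
    obtain ⟨z, c, rfl⟩ : ∃ z c, biprod.lift z c = x :=
      ⟨x ≫ biprod.fst, x ≫ biprod.snd, by ext <;> simp⟩
    replace hx : z ≫ cokernel.π j' = c ≫ q := by
      rw [← sub_eq_zero]; simpa [S, sub_eq_add_neg] using hx
    obtain ⟨A', π, _, y, hy⟩ := surjective_up_to_refinements_of_epi (cokernel.π j) c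
    have hw : (π ≫ z - y ≫ e) ≫ cokernel.π j' = 0 := by
      simp [hx, reassoc_of% hy, sq.w]
    refine ⟨A', π, inferInstance, y + hj'.lift _ hw ≫ j, ?_⟩
    ext
    · simp only [S, Category.assoc, biprod.lift_fst, Preadditive.add_comp, h, hj'.lift_f]
      abel
    · simp [S, hy]
  exact ⟨sq, ⟨sq.isLimitEquivIsLimitKernelFork.symm hS.fIsKernel⟩⟩

lemma ShortComplex.exact_epi_comp_iff {A B X Y : C} (p : A ⟶ B) [Epi p] {i : B ⟶ X}
    {g : X ⟶ Y} (w : i ≫ g = 0) :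
    (ShortComplex.mk (p ≫ i) g (by simp [w])).Exact ↔ (ShortComplex.mk i g w).Exact :=
  ShortComplex.exact_iff_of_epi_of_isIso_of_mono (C := C)
    { τ₁ := p, τ₂ := 𝟙 _, τ₃ := 𝟙 _ }

lemma ShortComplex.exact_comp_iff_epi {A B X Y : C} (p : A ⟶ B) {i : B ⟶ X} {g : X ⟶ Y}
    [Mono i] (w : i ≫ g = 0) (hS : (ShortComplex.mk i g w).Exact) :
    (ShortComplex.mk (p ≫ i) g (by simp [w])).Exact ↔ Epi p := by
  refine ⟨fun h ↦ ?_, fun _ ↦ (exact_epi_comp_iff p w).2 hS⟩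
  obtain ⟨A', π, _, x, hx⟩ := h.exact_up_to_refinements i w
  exact epi_of_epi_fac (cancel_mono i |>.1 (by simpa using hx.symm))

end

namespace Functor

variable {C D : Type*} [Category C] [Category D] [Abelian C] [Abelian D] (F : C ⥤ D)
  [PreservesFiniteLimits F]

lemma epi_map_cokernel_π_of_comp {X Y Z : C} {j : X ⟶ Y} {e : Y ⟶ Z} {j' : X ⟶ Z}
    (h : j ≫ e = j') [Mono j'] [Epi (F.map (cokernel.π j'))] : Epi (F.map (cokernel.π j)) :=
  (MorphismProperty.epimorphisms D).of_isPullback ((isPullback_cokernel_map h).map F)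
    (.infer_property _)

lemma isIso_map_kernel_ι_of_isZero {X Y : C} (g : X ⟶ Y) (hY : IsZero (F.obj Y)) :
    IsIso (F.map (kernel.ι g)) :=
  KernelFork.IsLimit.isIso_ι _ (KernelFork.mapIsLimit _ (kernelIsKernel g) F) (hY.eq_of_tgt _ _)

lemma mono_map_cokernel_π_of_isZero {K X : C} (i : K ⟶ X) [Mono i] (hK : IsZero (F.obj K)) :
    Mono (F.map (cokernel.π i)) :=
  ((ShortComplex.exact_cokernel i).map_of_mono_of_preservesKernel F inferInstance
    inferInstance).mono_g (hK.eq_of_src _ _)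

variable [F.Additive] [EnoughInjectives C]

lemma isZero_rightDerived_one_iff_epi {X : C} (R : InjectiveResolution X) :
    IsZero ((F.rightDerived 1).obj X) ↔ Epi (F.map (cokernel.π (R.ι.f 0))) := by
  set m := cokernel.desc (R.ι.f 0) (R.cocomplex.d 0 1) R.ι_f_zero_comp_complex_d
  have hm : cokernel.π (R.ι.f 0) ≫ m = R.cocomplex.d 0 1 := cokernel.π_desc _ _ _
  have : Mono m := R.exact₀.mono_cokernelDesc
  have hmd : m ≫ R.cocomplex.d 1 2 = 0 := by
    rw [← cancel_epi (cokernel.π (R.ι.f 0)), reassoc_of% hm, R.cocomplex.d_comp_d, comp_zero]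
  have hC : (ShortComplex.mk m (R.cocomplex.d 1 2) hmd).Exact := by
    rw [← ShortComplex.exact_epi_comp_iff (cokernel.π _)]
    simpa only [hm] using R.exact_succ 0
  have hD := hC.map_of_mono_of_preservesKernel F inferInstance inferInstance
  rw [← ShortComplex.exact_comp_iff_epi (F.map (cokernel.π _)) _ hD,
    (R.isoRightDerivedObj F 1).isZero_iff, HomologicalComplex.homologyFunctor_obj,
    ← HomologicalComplex.exactAt_iff_isZero_homology,
    HomologicalComplex.exactAt_iff' _ 0 1 2 (by simp) (by simp)]
  simp only [← F.map_comp, hm]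
  rfl

lemma epi_map_cokernel_π_of_isZero_rightDerived_one {A B : C} (i : A ⟶ B) [Mono i]
    (hA : IsZero ((F.rightDerived 1).obj A)) : Epi (F.map (cokernel.π i)) := by
  let R := InjectiveResolution.of A
  -- `R.ι.f 0` has source `((single₀ C).obj A).X 0`, which instance search does not identify
  -- with `A`.
  let j : A ⟶ R.cocomplex.X 0 := R.ι.f 0
  have : Mono j := inferInstanceAs (Mono (R.ι.f 0))
  have : Epi (F.map (cokernel.π j)) := (F.isZero_rightDerived_one_iff_epi R).1 hA
  exact F.epi_map_cokernel_π_of_comp (Injective.comp_factorThru j i)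

lemma isZero_rightDerived_one_of_epi {X I : C} (j : X ⟶ I) [Mono j] [Injective I]
    [Epi (F.map (cokernel.π j))] : IsZero ((F.rightDerived 1).obj X) := by
  let R := InjectiveResolution.of X
  let j₀ : X ⟶ R.cocomplex.X 0 := R.ι.f 0
  have : Mono j₀ := inferInstanceAs (Mono (R.ι.f 0))
  have : Epi (F.map (cokernel.π j₀)) :=
    F.epi_map_cokernel_π_of_comp (Injective.comp_factorThru j j₀)
  exact (F.isZero_rightDerived_one_iff_epi R).2 this

lemma isIso_map_cokernel_π_of_isZero {K X : C} (i : K ⟶ X) [Mono i] (h₀ : IsZero (F.obj K))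
    (h₁ : IsZero ((F.rightDerived 1).obj K)) : IsIso (F.map (cokernel.π i)) :=
  have := F.mono_map_cokernel_π_of_isZero i h₀
  have := F.epi_map_cokernel_π_of_isZero_rightDerived_one i h₁
  isIso_of_mono_of_epi _

lemma isZero_rightDerived_one_of_mono {A B : C} (i : A ⟶ B) [Mono i]
    (hQ : IsZero (F.obj (cokernel i))) (hB : IsZero ((F.rightDerived 1).obj B)) :
    IsZero ((F.rightDerived 1).obj A) := by
  let j := Injective.ι B
  let q := cokernel.map i (i ≫ j) (𝟙 _) j (by simp)
  let g := cokernel.map (i ≫ j) j i (𝟙 _) (by simp)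
  -- `ker j ⟶ coker i ⟶ coker (i ≫ j) ⟶ coker j ⟶ 0` is exact and `ker j = 0`.
  have hseq := kernelCokernelCompSequence_exact i j
  have : Mono q := (hseq.exact 2).mono_g ((isZero_kernel_of_mono j).eq_of_src _ _)
  have hqg : (ShortComplex.mk q g (hseq.toIsComplex.zero 3)).Exact := hseq.exact 3
  have : Mono (F.map g) :=
    (hqg.map_of_mono_of_preservesKernel F inferInstance inferInstance).mono_g
      (hQ.eq_of_src _ _)
  have : Epi (F.map (cokernel.π j)) := F.epi_map_cokernel_π_of_isZero_rightDerived_one j hB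
  have hπ : F.map (cokernel.π (i ≫ j)) ≫ F.map g = F.map (cokernel.π j) := by
    rw [← F.map_comp, cokernel.π_desc, Category.id_comp]
  have : Epi (F.map g) := epi_of_epi_fac hπ
  have : IsIso (F.map g) := isIso_of_mono_of_epi _
  have : Epi (F.map (cokernel.π (i ≫ j))) :=
    (epi_comp_iff_of_isIso _ (F.map g)).1 (hπ ▸ inferInstance)
  exact F.isZero_rightDerived_one_of_epi (i ≫ j)

end Functor
end CategoryTheory

theorem stmt_11_general {C D : Type*} [Category C] [Category D] [Abelian C] [Abelian D]
    [EnoughInjectives C]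
    (F : C ⥤ D) [F.Additive] [PreservesFiniteLimits F]
    {M N : C} (f : M ⟶ N)
    (hN : IsZero ((F.rightDerived 1).obj N))
    (hker : IsZero (F.obj (kernel f)) ∧ IsZero ((F.rightDerived 1).obj (kernel f)))
    (hcoker : IsZero (F.obj (cokernel f)) ∧
      IsZero ((F.rightDerived 1).obj (cokernel f))) :
    IsIso (F.map f) ∧
    IsZero ((F.rightDerived 1).obj (Abelian.image f)) ∧
    Nonempty (F.obj M ≅ F.obj (Abelian.image f)) ∧
    Nonempty (F.obj (Abelian.image f) ≅ F.obj N) := by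
  have : IsIso (F.map (Abelian.image.ι f)) := F.isIso_map_kernel_ι_of_isZero _ hcoker.1
  have : IsIso (F.map (Abelian.factorThruImage f)) := by
    have := F.isIso_map_cokernel_π_of_isZero (kernel.ι f) hker.1 hker.2
    have hfac : Abelian.coimage.π f ≫ Abelian.coimageImageComparison f =
        Abelian.factorThruImage f := cokernel.π_desc _ _ _
    rw [← hfac, F.map_comp]
    infer_instance
  refine ⟨?_, ?_, ⟨asIso (F.map (Abelian.factorThruImage f))⟩,
    ⟨asIso (F.map (Abelian.image.ι f))⟩⟩
  · rw [← Abelian.image.fac f, F.map_comp]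
    infer_instance
  · have e : cokernel (Abelian.image.ι f) ≅ cokernel f :=
      (cokernelEpiComp (Abelian.factorThruImage f) (Abelian.image.ι f)).symm ≪≫
        cokernelIsoOfEq (Abelian.image.fac f)
    exact F.isZero_rightDerived_one_of_mono (Abelian.image.ι f)
      (hcoker.1.of_iso (F.mapIso e)) hN

/-- Let `F` be a left exact additive functor between abelian categories with enough
injectives such that `R²F = 0`. If `f : M → N` is a morphism with `M`, `N` both
`F`-acyclic and with exceptional kernel and cokernel (killed by `F` and `R¹F`), then
`F f` is an isomorphism, the image of `f` is `F`-acyclic, and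
`F M ≅ F (Im f) ≅ F N`. -/
theorem stmt_11 {C D : Type*} [Category C] [Category D] [Abelian C] [Abelian D]
    [EnoughInjectives C]
    (F : C ⥤ D) [F.Additive] [PreservesFiniteLimits F]
    (hR2 : ∀ X : C, IsZero ((F.rightDerived 2).obj X))
    {M N : C} (f : M ⟶ N)
    (hM : IsZero ((F.rightDerived 1).obj M))
    (hN : IsZero ((F.rightDerived 1).obj N))
    (hker : IsZero (F.obj (kernel f)) ∧ IsZero ((F.rightDerived 1).obj (kernel f)))
    (hcoker : IsZero (F.obj (cokernel f)) ∧
      IsZero ((F.rightDerived 1).obj (cokernel f))) :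
    IsIso (F.map f) ∧
    IsZero ((F.rightDerived 1).obj (Abelian.image f)) ∧
    Nonempty (F.obj M ≅ F.obj (Abelian.image f)) ∧
    Nonempty (F.obj (Abelian.image f) ≅ F.obj N) :=
  stmt_11_general F f hN hker hcoker
end

section
/- Let A be a commutative R-algebra with a bracket {,} : A × A → A that is an alternating biderivation, and let B be a commutative A-algebra such that the natural map Ω_{A/R} ⊗_A B → Ω_{B/R} is an isomorphism (e.g. B étale over A, or a localization of A). Then there is a unique alternating biderivation on B restricting to that of A, and if the bracket on A satisfies the Jacobi identity then so does the bracket on B. -/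
/-!
An alternating biderivation on `A` is the same thing as an alternating `A`-bilinear form on
`Ω[A⁄R]`. Base-changing that form along `A → B` and transporting it through
`B ⊗[A] Ω[A⁄R] ≃ Ω[B⁄R]` gives the bracket on `B`. Since `Ω[B⁄R]` is then spanned over `B` by
the image of `Ω[A⁄R]`, a derivation of `B` is determined by its values on `A`: this gives
uniqueness, and, applied three times to the Jacobiator (a cyclically symmetric derivation in each
variable that vanishes on `A`), the Jacobi identity.
-/

open KaehlerDifferential

theorem LinearMap.isAlt_of_span_range_eq_top {S M N ι : Type*} [CommSemiring S]
    [AddCommMonoid M] [Module S M] [AddCommMonoid N] [Module S N] {φ : M →ₗ[S] M →ₗ[S] N}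
    {v : ι → M} (hv : Submodule.span S (Set.range v) = ⊤) (hdiag : ∀ i, φ (v i) (v i) = 0)
    (hanti : ∀ i j, φ (v i) (v j) + φ (v j) (v i) = 0) : φ.IsAlt := by
  have hsymm : φ + φ.flip = 0 :=
    ext_on_range hv fun i => ext_on_range hv fun j => hanti i j
  intro x
  have hx : x ∈ Submodule.span S (Set.range v) := hv ▸ Submodule.mem_top
  induction hx using Submodule.span_induction with
  | mem x hx => obtain ⟨i, rfl⟩ := hx; exact hdiag i
  | zero => simp
  | add x y _ _ hx hy =>
    have hxy : φ x y + φ y x = 0 := LinearMap.congr_fun₂ hsymm x y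
    simp only [map_add, LinearMap.add_apply, hx, hy, zero_add, add_zero]
    rwa [add_comm (φ y x)]
  | smul c x _ hx => simp [hx]

structure IsBiderivation (R : Type*) {S : Type*} [CommRing R] [CommRing S] [Algebra R S]
    (b : S → S → S) : Prop where
  add_left : ∀ f g h, b (f + g) h = b f h + b g h
  smul_left : ∀ (r : R) f g, b (r • f) g = r • b f g
  add_right : ∀ f g h, b f (g + h) = b f g + b f h
  smul_right : ∀ (r : R) f g, b f (r • g) = r • b f g
  leibniz_left : ∀ f g h, b (f * g) h = f * b g h + g * b f h
  leibniz_right : ∀ f g h, b f (g * h) = g * b f h + h * b f g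

namespace IsBiderivation

variable {R S : Type*} [CommRing R] [CommRing S] [Algebra R S] {b : S → S → S}
  (hb : IsBiderivation R b)

def derivationLeft (g : S) : Derivation R S S :=
  Derivation.mk'
    { toFun := fun f => b f g
      map_add' := fun f f' => hb.add_left f f' g
      map_smul' := fun r f => hb.smul_left r f g }
    fun f f' => hb.leibniz_left f f' g

def derivationRight (f : S) : Derivation R S S :=
  Derivation.mk'
    { toFun := fun g => b f g
      map_add' := hb.add_right f
      map_smul' := fun r g => hb.smul_right r f g }
    (hb.leibniz_right f)

@[simp] theorem derivationLeft_apply (f g : S) : hb.derivationLeft g f = b f g := rfl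

@[simp] theorem derivationRight_apply (f g : S) : hb.derivationRight f g = b f g := rfl

def toDerivation : Derivation R S (Derivation R S S) :=
  Derivation.mk'
    { toFun := hb.derivationRight
      map_add' := fun f f' => Derivation.ext (hb.add_left f f')
      map_smul' := fun r f => Derivation.ext (hb.smul_left r f) }
    fun f f' => Derivation.ext (hb.leibniz_left f f')

noncomputable def toBilinForm : LinearMap.BilinForm S Ω[S⁄R] :=
  ((linearMapEquivDerivation R S).symm.toLinearMap.compDer hb.toDerivation).liftKaehlerDifferential

@[simp] theorem toBilinForm_D_D (f g : S) : hb.toBilinForm (D R S f) (D R S g) = b f g := by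
  simp [toBilinForm, toDerivation]

include hb in
theorem add_swap (halt : ∀ f, b f f = 0) (f g : S) : b f g + b g f = 0 := by
  have h := halt (f + g)
  rwa [hb.add_left, hb.add_right, hb.add_right, halt, halt, zero_add, add_zero] at h

theorem toBilinForm_isAlt (halt : ∀ f, b f f = 0) : hb.toBilinForm.IsAlt :=
  LinearMap.isAlt_of_span_range_eq_top (span_range_derivation R S)
    (by simpa using halt) (by simpa using hb.add_swap halt)

/-- The Jacobiator `w ↦ {w, {x, y}} + {x, {y, w}} + {y, {w, x}}` as a derivation: by
antisymmetry its last two terms are `⁅{x, ·}, {y, ·}⁆ w`. -/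
def jacobiator (x y : S) : Derivation R S S :=
  hb.derivationLeft (b x y) + ⁅hb.derivationRight x, hb.derivationRight y⁆

theorem jacobiator_apply (halt : ∀ f, b f f = 0) (x y w : S) :
    hb.jacobiator x y w = b w (b x y) + b x (b y w) + b y (b w x) := by
  have hswap : b w x = -b x w := eq_neg_of_add_eq_zero_left (hb.add_swap halt w x)
  rw [jacobiator, Derivation.add_apply, Derivation.commutator_apply, hswap,
    ← derivationRight_apply hb y (-_), map_neg]
  simp only [derivationLeft_apply, derivationRight_apply]
  ring

end IsBiderivation

theorem LinearMap.BilinForm.isBiderivation_D {R S : Type*} [CommRing R] [CommRing S]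
    [Algebra R S] (φ : LinearMap.BilinForm S Ω[S⁄R]) :
    IsBiderivation R fun f g => φ (D R S f) (D R S g) where
  add_left f g h := by simp
  smul_left r f g := by simp
  add_right f g h := by simp
  smul_right r f g := by simp
  leibniz_left f g h := by simp
  leibniz_right f g h := by simp

section Extension

variable {R A B : Type*} [CommRing R] [CommRing A] [CommRing B]
  [Algebra R A] [Algebra R B] [Algebra A B] [IsScalarTower R A B]

theorem KaehlerDifferential.span_range_map_eq_top
    (hΩ : Function.Surjective (mapBaseChange R A B)) :
    Submodule.span B (Set.range (map R R A B)) = ⊤ := by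
  rw [eq_top_iff]
  rintro x -
  obtain ⟨y, rfl⟩ := hΩ x
  induction y using TensorProduct.induction_on with
  | zero => simp
  | tmul b ω =>
    rw [mapBaseChange_tmul]
    exact Submodule.smul_mem _ b (Submodule.subset_span ⟨ω, rfl⟩)
  | add y z hy hz => rw [map_add]; exact add_mem hy hz

theorem Derivation.ext_algebraMap (hΩ : Function.Surjective (mapBaseChange R A B))
    {D₁ D₂ : Derivation R B B} (h : ∀ a, D₁ (algebraMap A B a) = D₂ (algebraMap A B a)) :
    D₁ = D₂ := by
  have hA : (D₁.liftKaehlerDifferential.restrictScalars A) ∘ₗ map R R A B =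
      (D₂.liftKaehlerDifferential.restrictScalars A) ∘ₗ map R R A B := by
    ext a
    simp [map_D, h]
  have hB : D₁.liftKaehlerDifferential = D₂.liftKaehlerDifferential :=
    LinearMap.ext_on_range (span_range_map_eq_top hΩ) (LinearMap.congr_fun hA)
  exact (linearMapEquivDerivation R B).symm.injective hB

theorem Derivation.eq_zero_of_cyclic (hΩ : Function.Surjective (mapBaseChange R A B))
    (T : B → B → Derivation R B B) (hcyc : ∀ x y z, T x y z = T y z x)
    (hA : ∀ a a' a'' : A,
      T (algebraMap A B a) (algebraMap A B a') (algebraMap A B a'') = 0)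
    (x y z : B) : T x y z = 0 := by
  have h₂ : ∀ a a' : A, T (algebraMap A B a) (algebraMap A B a') = 0 := fun a a' =>
    ext_algebraMap hΩ (hA a a')
  have h₁ : ∀ (a : A) (y : B), T (algebraMap A B a) y = 0 := fun a y =>
    ext_algebraMap hΩ fun a'' => by rw [hcyc, hcyc, h₂, zero_apply, zero_apply]
  have h₀ : T x y = 0 :=
    ext_algebraMap hΩ fun a => by rw [hcyc, hcyc, h₁, zero_apply, zero_apply]
  rw [h₀, zero_apply]

noncomputable def KaehlerDifferential.extendBilinForm
    (hΩ : Function.Bijective (mapBaseChange R A B)) (φ : LinearMap.BilinForm A Ω[A⁄R]) :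
    LinearMap.BilinForm B Ω[B⁄R] :=
  LinearMap.BilinForm.congr (LinearEquiv.ofBijective _ hΩ) (φ.baseChange B)

namespace KaehlerDifferential

variable (hΩ : Function.Bijective (mapBaseChange R A B)) (φ : LinearMap.BilinForm A Ω[A⁄R])

@[simp] theorem extendBilinForm_map_map (ω ω' : Ω[A⁄R]) :
    extendBilinForm hΩ φ (map R R A B ω) (map R R A B ω') = algebraMap A B (φ ω ω') := by
  have hinv : ∀ ω, (LinearEquiv.ofBijective _ hΩ).symm (map R R A B ω) = 1 ⊗ₜ ω := by
    intro ω
    rw [LinearEquiv.symm_apply_eq, LinearEquiv.ofBijective_apply, mapBaseChange_tmul, one_smul]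
  simp [extendBilinForm, hinv, Algebra.algebraMap_eq_smul_one]

theorem extendBilinForm_isAlt {φ : LinearMap.BilinForm A Ω[A⁄R]} (hφ : φ.IsAlt) :
    (extendBilinForm hΩ φ).IsAlt :=
  LinearMap.isAlt_of_span_range_eq_top (span_range_map_eq_top hΩ.surjective)
    (fun ω => by rw [extendBilinForm_map_map, hφ ω, map_zero])
    (fun ω ω' => by
      rw [extendBilinForm_map_map, extendBilinForm_map_map, ← map_add,
        ← LinearMap.IsAlt.neg hφ ω ω', add_neg_cancel, map_zero])

end KaehlerDifferential

namespace IsBiderivation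

theorem eq_of_algebraMap (hΩ : Function.Surjective (mapBaseChange R A B)) {b₁ b₂ : B → B → B}
    (hb₁ : IsBiderivation R b₁) (hb₂ : IsBiderivation R b₂)
    (h : ∀ a a' : A, b₁ (algebraMap A B a) (algebraMap A B a') =
      b₂ (algebraMap A B a) (algebraMap A B a')) :
    b₁ = b₂ := by
  have hright : ∀ a : A, hb₁.derivationRight (algebraMap A B a) =
      hb₂.derivationRight (algebraMap A B a) :=
    fun a => Derivation.ext_algebraMap hΩ (h a)
  funext f g
  have hleft : hb₁.derivationLeft g = hb₂.derivationLeft g :=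
    Derivation.ext_algebraMap hΩ fun a => DFunLike.congr_fun (hright a) g
  exact DFunLike.congr_fun hleft f

theorem jacobi_of_algebraMap (hΩ : Function.Surjective (mapBaseChange R A B)) {b : B → B → B}
    (hb : IsBiderivation R b) (halt : ∀ f, b f f = 0)
    (hA : ∀ a a' a'' : A, b (algebraMap A B a) (b (algebraMap A B a') (algebraMap A B a'')) +
      b (algebraMap A B a') (b (algebraMap A B a'') (algebraMap A B a)) +
      b (algebraMap A B a'') (b (algebraMap A B a) (algebraMap A B a')) = 0)
    (f g h : B) : b f (b g h) + b g (b h f) + b h (b f g) = 0 := by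
  have hcyc : ∀ x y z, hb.jacobiator x y z = hb.jacobiator y z x := fun x y z => by
    rw [hb.jacobiator_apply halt, hb.jacobiator_apply halt]
    ring
  have h₀ := Derivation.eq_zero_of_cyclic hΩ hb.jacobiator hcyc
    (fun a a' a'' => by rw [hb.jacobiator_apply halt]; exact hA a'' a a') g h f
  rwa [hb.jacobiator_apply halt] at h₀

end IsBiderivation

end Extension

/-- Let `A` be a commutative `R`-algebra with an alternating biderivation `bA`, and
`B` a commutative `A`-algebra such that the natural map
`Ω_{A/R} ⊗_A B → Ω_{B/R}` is an isomorphism (e.g. `B` étale over `A` or a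
localization).  Then there is a unique alternating biderivation on `B` restricting
to `bA`, and any such biderivation satisfies the Jacobi identity whenever `bA`
does. -/
theorem stmt_15 (R A B : Type*) [CommRing R] [CommRing A] [CommRing B]
    [Algebra R A] [Algebra R B] [Algebra A B] [IsScalarTower R A B]
    (hΩ : Function.Bijective (KaehlerDifferential.mapBaseChange R A B))
    (bA : A → A → A)
    (haddA₁ : ∀ f g h : A, bA (f + g) h = bA f h + bA g h)
    (hsmulA₁ : ∀ (r : R) (f g : A), bA (r • f) g = r • bA f g)
    (haddA₂ : ∀ f g h : A, bA f (g + h) = bA f g + bA f h)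
    (hsmulA₂ : ∀ (r : R) (f g : A), bA f (r • g) = r • bA f g)
    (hleibA₁ : ∀ f g h : A, bA (f * g) h = f * bA g h + g * bA f h)
    (hleibA₂ : ∀ f g h : A, bA f (g * h) = g * bA f h + h * bA f g)
    (haltA : ∀ f : A, bA f f = 0) :
    (∃! bB : B → B → B,
      ((∀ f g h : B, bB (f + g) h = bB f h + bB g h) ∧
       (∀ (r : R) (f g : B), bB (r • f) g = r • bB f g) ∧
       (∀ f g h : B, bB f (g + h) = bB f g + bB f h) ∧
       (∀ (r : R) (f g : B), bB f (r • g) = r • bB f g) ∧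
       (∀ f g h : B, bB (f * g) h = f * bB g h + g * bB f h) ∧
       (∀ f g h : B, bB f (g * h) = g * bB f h + h * bB f g) ∧
       (∀ f : B, bB f f = 0)) ∧
      (∀ f g : A, bB (algebraMap A B f) (algebraMap A B g)
          = algebraMap A B (bA f g))) ∧
    ((∀ f g h : A, bA f (bA g h) + bA g (bA h f) + bA h (bA f g) = 0) →
      ∀ bB : B → B → B,
        ((∀ f g h : B, bB (f + g) h = bB f h + bB g h) ∧
         (∀ (r : R) (f g : B), bB (r • f) g = r • bB f g) ∧
         (∀ f g h : B, bB f (g + h) = bB f g + bB f h) ∧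
         (∀ (r : R) (f g : B), bB f (r • g) = r • bB f g) ∧
         (∀ f g h : B, bB (f * g) h = f * bB g h + g * bB f h) ∧
         (∀ f g h : B, bB f (g * h) = g * bB f h + h * bB f g) ∧
         (∀ f : B, bB f f = 0)) →
        (∀ f g : A, bB (algebraMap A B f) (algebraMap A B g)
            = algebraMap A B (bA f g)) →
        ∀ f g h : B, bB f (bB g h) + bB g (bB h f) + bB h (bB f g) = 0) := by
  have hbA : IsBiderivation R bA := ⟨haddA₁, hsmulA₁, haddA₂, hsmulA₂, hleibA₁, hleibA₂⟩
  set φ := extendBilinForm hΩ hbA.toBilinForm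
  have hφ : φ.IsAlt := extendBilinForm_isAlt hΩ (hbA.toBilinForm_isAlt haltA)
  have hφA : ∀ f g : A, φ (D R B (algebraMap A B f)) (D R B (algebraMap A B g)) =
      algebraMap A B (bA f g) := fun f g => by
    rw [← map_D R R A B, ← map_D R R A B, extendBilinForm_map_map, hbA.toBilinForm_D_D]
  have hbB := φ.isBiderivation_D (R := R)
  refine ⟨⟨fun f g => φ (D R B f) (D R B g), ⟨⟨hbB.add_left, hbB.smul_left, hbB.add_right,
    hbB.smul_right, hbB.leibniz_left, hbB.leibniz_right, fun f => hφ _⟩, hφA⟩, ?_⟩, ?_⟩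
  · rintro bB ⟨⟨hadd₁, hsmul₁, hadd₂, hsmul₂, hleib₁, hleib₂, -⟩, hres⟩
    exact IsBiderivation.eq_of_algebraMap hΩ.surjective
      ⟨hadd₁, hsmul₁, hadd₂, hsmul₂, hleib₁, hleib₂⟩ hbB fun f g => by rw [hres, hφA]
  · rintro hJA bB ⟨hadd₁, hsmul₁, hadd₂, hsmul₂, hleib₁, hleib₂, halt⟩ hres
    refine IsBiderivation.jacobi_of_algebraMap hΩ.surjective
      ⟨hadd₁, hsmul₁, hadd₂, hsmul₂, hleib₁, hleib₂⟩ halt fun f g h => ?_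
    simp only [hres, ← map_add, hJA, map_zero]
end
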